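/- Let 𝔤 = (V,E) be a locally finite graph and μ a random forest on 𝔤 that is invariant under a vertex-transitive group of automorphisms. Let i_V(𝔤) = inf |∂_V 𝔥|/|𝔥| over finite nonempty subgraphs 𝔥, where ∂_V denotes the vertex boundary. Then the expected degree of μ satisfies deg(μ) ≤ 2 + i_V(𝔤). -/
import Mathlib

open MeasureTheory

def forestGraph {V : Type*} (F : V × V → Bool) : SimpleGraph V :=
  SimpleGraph.fromRel fun a b => F (a, b) = true

def IsForest {V : Type*} (F : V × V → Bool) : Prop :=
  (∀ a b, F (a, b) = F (b, a)) ∧ (∀ a, F (a, a) = false) ∧ (forestGraph F).IsAcyclic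

section Aux

variable {V : Type*} {F : V × V → Bool}

lemma forestGraph_adj (hsym : ∀ a b, F (a, b) = F (b, a)) (hirr : ∀ a, F (a, a) = false)
    {a b : V} : (forestGraph F).Adj a b ↔ F (a, b) = true := by
  simp only [forestGraph, SimpleGraph.fromRel_adj]
  constructor
  · rintro ⟨hne, h | h⟩
    · exact h
    · rw [hsym]; exact h
  · intro h
    refine ⟨?_, Or.inl h⟩
    rintro rfl
    rw [hirr] at h
    exact Bool.false_ne_true h

lemma forest_leaf (hsym : ∀ a b, F (a, b) = F (b, a)) (hirr : ∀ a, F (a, a) = false)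
    (hacy : (forestGraph F).IsAcyclic) (K : Finset V) (hK : K.Nonempty) :
    ∃ w ∈ K, (K.filter fun x => F (w, x) = true).card ≤ 1 := by
  classical
  set H := forestGraph F with hH
  obtain ⟨u0, hu0⟩ := hK
  set L : Set ℕ := {n | ∃ (w u : V) (p : H.Walk w u), p.IsPath ∧ (∀ x ∈ p.support, x ∈ K) ∧
    p.length = n} with hL
  have hne : L.Nonempty := ⟨0, u0, u0, SimpleGraph.Walk.nil, SimpleGraph.Walk.IsPath.nil,
    by simp [hu0], rfl⟩
  have hbdd : BddAbove L := by
    refine ⟨K.card, fun n hn => ?_⟩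
    obtain ⟨w, u, p, hp, hsupp, rfl⟩ := hn
    have h1 : p.support.toFinset ⊆ K := fun x hx => hsupp x (List.mem_toFinset.mp hx)
    have h2 : p.support.toFinset.card = p.length + 1 := by
      rw [List.toFinset_card_of_nodup hp.support_nodup, SimpleGraph.Walk.length_support]
    have := Finset.card_le_card h1
    omega
  obtain ⟨w, u, p, hp, hsuppK, hlen⟩ := Nat.sSup_mem hne hbdd
  refine ⟨w, hsuppK w p.start_mem_support, ?_⟩
  rw [Finset.card_le_one]
  have key : ∀ x ∈ K, F (w, x) = true → x = p.getVert 1 := by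
    intro x hxK hx
    have hadj : H.Adj w x := (forestGraph_adj hsym hirr).mpr hx
    by_cases hxs : x ∈ p.support
    · have hq : (p.takeUntil x hxs).IsPath := hp.takeUntil hxs
      have hone : (SimpleGraph.Walk.cons hadj SimpleGraph.Walk.nil).IsPath :=
        SimpleGraph.Walk.IsPath.nil.cons (by simpa using hadj.ne)
      have heq := hacy.path_unique ⟨p.takeUntil x hxs, hq⟩
        ⟨SimpleGraph.Walk.cons hadj SimpleGraph.Walk.nil, hone⟩
      have hlen1 : (p.takeUntil x hxs).length = 1 := by
        have := congrArg (fun q : H.Path w x => q.1.length) heq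
        simpa using this
      have hspec := p.take_spec hxs
      have hgv : p.getVert 1 = x := by
        conv_lhs => rw [← hspec]
        rw [SimpleGraph.Walk.getVert_append]
        simp [hlen1]
      exact hgv.symm
    · exfalso
      have hext : (SimpleGraph.Walk.cons hadj.symm p).IsPath := hp.cons hxs
      have hmem : p.length + 1 ∈ L := by
        refine ⟨x, u, SimpleGraph.Walk.cons hadj.symm p, hext, ?_, by simp⟩
        intro y hy
        rw [SimpleGraph.Walk.support_cons, List.mem_cons] at hy
        rcases hy with rfl | hy
        · exact hxK
        · exact hsuppK y hy
      have := le_csSup hbdd hmem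
      omega
  intro a ha b hb
  simp only [Finset.mem_filter] at ha hb
  rw [key a ha.1 ha.2, key b hb.1 hb.2]

lemma forest_count (hsym : ∀ a b, F (a, b) = F (b, a)) (hirr : ∀ a, F (a, a) = false)
    (hacy : (forestGraph F).IsAcyclic) (K : Finset V) :
    (∑ u ∈ K, ∑ x ∈ K, if F (u, x) = true then 1 else 0) ≤ 2 * K.card := by
  classical
  induction K using Finset.strongInduction with
  | _ K ih =>
  rcases K.eq_empty_or_nonempty with rfl | hK
  · simp
  obtain ⟨w, hwK, hw⟩ := forest_leaf hsym hirr hacy K hK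
  set K' := K.erase w with hK'
  have hss : K' ⊂ K := Finset.erase_ssubset hwK
  have hins : K = insert w K' := (Finset.insert_erase hwK).symm
  have hwn : w ∉ K' := Finset.notMem_erase w K
  have hrow : ∀ (s : Finset V), s ⊆ K → (∑ x ∈ s, if F (w, x) = true then 1 else 0) ≤ 1 := by
    intro s hs
    calc (∑ x ∈ s, if F (w, x) = true then 1 else 0)
        ≤ ∑ x ∈ K, if F (w, x) = true then 1 else 0 :=
          Finset.sum_le_sum_of_subset_of_nonneg hs (fun _ _ _ => by positivity)
      _ = (K.filter fun x => F (w, x) = true).card := by rw [Finset.sum_boole]; simp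
      _ ≤ 1 := hw
  have hcol : (∑ u ∈ K', if F (u, w) = true then 1 else 0) ≤ 1 := by
    have hflip : (∑ u ∈ K', if F (u, w) = true then 1 else 0)
        = ∑ u ∈ K', if F (w, u) = true then 1 else 0 :=
      Finset.sum_congr rfl fun u _ => by rw [hsym]
    rw [hflip]
    exact hrow K' (Finset.erase_subset _ _)
  have hT' := ih K' hss
  have hsplit : (∑ u ∈ K, ∑ x ∈ K, if F (u, x) = true then 1 else 0)
      = (∑ x ∈ K, if F (w, x) = true then 1 else 0)
        + ∑ u ∈ K', ((if F (u, w) = true then 1 else 0)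
          + ∑ x ∈ K', if F (u, x) = true then 1 else 0) := by
    rw [hins]
    rw [Finset.sum_insert hwn]
    simp only [Finset.sum_insert hwn]
  rw [hsplit, Finset.sum_add_distrib]
  have hcard : K.card = K'.card + 1 := by
    rw [hK', Finset.card_erase_of_mem hwK]
    have := Finset.card_pos.mpr hK
    omega
  have h1 := hrow K (le_refl K)
  omega

end Aux

/-- a random forest `μ` on a locally finite graph `G`, invariant under a
vertex-transitive group of automorphisms, has expected degree at most `2 + i_V(G)`, where
`i_V(G) = inf |∂_V 𝔥|/|𝔥|` over finite nonempty subgraphs `𝔥`. -/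
theorem stmt15 {V Γ : Type*} [Countable V] [Group Γ] [MulAction Γ V]
    (G : SimpleGraph V) (hlf : ∀ v : V, (G.neighborSet v).Finite)
    (haut : ∀ (γ : Γ) (u w : V), G.Adj (γ • u) (γ • w) ↔ G.Adj u w)
    (htrans : ∀ u w : V, ∃ γ : Γ, γ • u = w)
    (μ : Measure ((V × V) → Bool)) [IsProbabilityMeasure μ]
    (hsupp : μ {F | IsForest F ∧ ∀ p : V × V, F p = true → G.Adj p.1 p.2} = 1)
    (hinv : ∀ γ : Γ,
      Measure.map (fun (F : (V × V) → Bool) (p : V × V) => F (γ⁻¹ • p.1, γ⁻¹ • p.2)) μ = μ)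
    (iV : ℝ)
    (hiV : iV = sInf {r : ℝ | ∃ h : Finset V, h.Nonempty ∧
      r = (({w : V | w ∉ h ∧ ∃ u ∈ h, G.Adj u w}.ncard : ℝ)) / (h.card : ℝ)})
    (v : V) :
    ∑' w : V, (μ {F | F (v, w) = true}).toReal ≤ 2 + iV := by
  classical
  set S := {F : (V × V) → Bool | IsForest F ∧ ∀ p : V × V, F p = true → G.Adj p.1 p.2} with hSdef
  have hmeas : ∀ p : V × V, MeasurableSet {F : (V × V) → Bool | F p = true} := by
    intro p
    have heq : {F : (V × V) → Bool | F p = true} = (fun F : (V × V) → Bool => F p) ⁻¹' {true} :=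
      rfl
    rw [heq]
    exact (measurable_pi_apply p) (measurableSet_singleton true)
  have hnull : ∀ (A : Set ((V × V) → Bool)), MeasurableSet A → A ∩ S = ∅ → μ A = 0 := by
    intro A hA hdis
    have hsub : S ⊆ Aᶜ := fun F hF hFA => (Set.eq_empty_iff_forall_notMem.mp hdis F) ⟨hFA, hF⟩
    have h1 : μ Aᶜ = 1 := le_antisymm prob_le_one (by rw [← hsupp]; exact measure_mono hsub)
    exact (prob_compl_eq_one_iff hA).mp h1
  set m : V → V → ENNReal := fun u w => μ {F | F (u, w) = true} with hm
  have hm_le : ∀ u w, m u w ≤ 1 := fun u w => prob_le_one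
  have hm_zero : ∀ u w, ¬ G.Adj u w → m u w = 0 := by
    intro u w h
    refine hnull _ (hmeas (u, w)) ?_
    apply Set.eq_empty_iff_forall_notMem.mpr
    rintro F ⟨hF, -, hadj⟩
    exact h (hadj (u, w) hF)
  set N : V → Finset V := fun u => (hlf u).toFinset with hN
  have hmemN : ∀ u w, w ∈ N u ↔ G.Adj u w := by
    intro u w
    simp [hN, Set.Finite.mem_toFinset]
  have hminv : ∀ (u : V), (∑' w, m u w) = ∑' w, m v w := by
    intro u
    obtain ⟨γ, hγ⟩ := htrans v u
    have hTmeas : Measurable (fun (F : (V × V) → Bool) (p : V × V) => F (γ⁻¹ • p.1, γ⁻¹ • p.2)) :=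
      measurable_pi_lambda _ fun p => measurable_pi_apply _
    have hmap : ∀ w, m u w = m v (γ⁻¹ • w) := by
      intro w
      show μ {F : (V × V) → Bool | F (u, w) = true}
        = μ {F : (V × V) → Bool | F (v, γ⁻¹ • w) = true}
      have h1 : μ {F : (V × V) → Bool | F (u, w) = true}
          = μ ((fun (F : (V × V) → Bool) (p : V × V) => F (γ⁻¹ • p.1, γ⁻¹ • p.2)) ⁻¹'
          {F | F (u, w) = true}) := by
        rw [← Measure.map_apply hTmeas (hmeas (u, w)), hinv γ]
      have h2 : (fun (F : (V × V) → Bool) (p : V × V) => F (γ⁻¹ • p.1, γ⁻¹ • p.2)) ⁻¹'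
          {F | F (u, w) = true} = {F : (V × V) → Bool | F (γ⁻¹ • u, γ⁻¹ • w) = true} := rfl
      have h3 : γ⁻¹ • u = v := by rw [← hγ, inv_smul_smul]
      rw [h1, h2, h3]
    calc (∑' w, m u w) = ∑' w, m v (γ⁻¹ • w) := tsum_congr hmap
      _ = ∑' w, m v w := Equiv.tsum_eq (MulAction.toPerm (γ⁻¹ : Γ)) (fun w => m v w)
  have htsum_fin : ∀ u, (∑' w, m u w) = ∑ w ∈ N u, m u w := fun u =>
    tsum_eq_sum (fun w hw => hm_zero u w (fun hadj => hw ((hmemN u w).mpr hadj)))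
  set Dv : ENNReal := ∑' w, m v w with hDv
  have hDv_ne : Dv ≠ ⊤ := by
    rw [hDv, htsum_fin v]
    refine (ENNReal.sum_lt_top.mpr (fun w _ => lt_of_le_of_lt (hm_le v w) ?_)).ne
    exact ENNReal.one_lt_top
  have hmain : ∀ (h : Finset V), h.Nonempty →
      Dv.toReal ≤ 2 + (({w : V | w ∉ h ∧ ∃ u ∈ h, G.Adj u w}.ncard : ℝ)) / (h.card : ℝ) := by
    intro h hne
    have hbfin : {w : V | w ∉ h ∧ ∃ u ∈ h, G.Adj u w}.Finite := by
      refine Set.Finite.subset (Set.Finite.biUnion h.finite_toSet (fun u _ => hlf u)) ?_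
      rintro w ⟨hw, u, hu, hadj⟩
      exact Set.mem_biUnion hu hadj
    set bf : Finset V := hbfin.toFinset with hbf
    have hncard : {w : V | w ∉ h ∧ ∃ u ∈ h, G.Adj u w}.ncard = bf.card := by
      rw [hbf]
      exact Set.ncard_eq_toFinset_card _ hbfin
    set K : Finset V := h ∪ bf with hKdef
    have hKcard : K.card ≤ h.card + bf.card := Finset.card_union_le _ _
    have hNsub : ∀ u ∈ h, N u ⊆ K := by
      intro u hu w hw
      have hadj : G.Adj u w := (hmemN u w).mp hw
      by_cases hwh : w ∈ h
      · exact Finset.mem_union_left _ hwh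
      · refine Finset.mem_union_right _ ?_
        rw [hbf, Set.Finite.mem_toFinset]
        exact ⟨hwh, u, hu, hadj⟩
    set B : ℕ := 2 * h.card + bf.card with hB
    set T : ((V × V) → Bool) → ENNReal :=
      fun F => ∑ u ∈ h, ∑ x ∈ K, if F (u, x) = true then 1 else 0 with hT
    have hindmeas : ∀ u x : V,
        Measurable (fun F : (V × V) → Bool => if F (u, x) = true then (1 : ENNReal) else 0) := by
      intro u x
      have heq : (fun F : (V × V) → Bool => if F (u, x) = true then (1 : ENNReal) else 0)
          = Set.indicator {F : (V × V) → Bool | F (u, x) = true} 1 := by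
        ext F; simp [Set.indicator_apply]
      rw [heq]
      exact Measurable.indicator measurable_const (hmeas (u, x))
    have hTmeas : Measurable T := by
      refine Finset.measurable_sum _ (fun u _ => Finset.measurable_sum _ (fun x _ => ?_))
      exact hindmeas u x
    have hint : (∑ u ∈ h, ∑ x ∈ K, m u x) = ∫⁻ F, T F ∂μ := by
      rw [hT]
      rw [lintegral_finset_sum _ (fun u _ => Finset.measurable_sum _ (fun x _ => hindmeas u x))]
      refine Finset.sum_congr rfl fun u _ => ?_
      rw [lintegral_finset_sum _ (fun x _ => hindmeas u x)]
      refine Finset.sum_congr rfl fun x _ => ?_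
      have heq : (fun F : (V × V) → Bool => if F (u, x) = true then (1 : ENNReal) else 0)
          = Set.indicator {F : (V × V) → Bool | F (u, x) = true} 1 := by
        ext F; simp [Set.indicator_apply]
      rw [heq, lintegral_indicator_one (hmeas (u, x))]
    have hptwise : ∀ F ∈ S, T F ≤ (B : ENNReal) := by
      intro F hF
      obtain ⟨⟨hsym, hirr, hacy⟩, hadjF⟩ := hF
      set c : Finset V → Finset V → ℕ :=
        fun A C => ∑ u ∈ A, ∑ x ∈ C, if F (u, x) = true then 1 else 0 with hc
      have hsymc : ∀ A C, c A C = c C A := by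
        intro A C
        rw [hc]
        simp only
        rw [Finset.sum_comm]
        exact Finset.sum_congr rfl fun x _ => Finset.sum_congr rfl fun u _ => by rw [hsym]
      have hKK : c K K ≤ 2 * K.card := forest_count hsym hirr hacy K
      have hh : h ⊆ K := Finset.subset_union_left
      have h2A : ∀ A : Finset V, c A K = c A h + c A (K \ h) := by
        intro A
        rw [hc]
        simp only
        rw [← Finset.sum_add_distrib]
        refine Finset.sum_congr rfl fun u _ => ?_
        rw [← Finset.sum_union Finset.sdiff_disjoint.symm, Finset.union_sdiff_of_subset hh]
      have h1A : ∀ A : Finset V, c K A = c h A + c (K \ h) A := by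
        intro A
        rw [hc]
        simp only
        rw [← Finset.sum_union Finset.sdiff_disjoint.symm, Finset.union_sdiff_of_subset hh]
      have hhh : c h h ≤ 2 * h.card := forest_count hsym hirr hacy h
      have hchK : c h K ≤ B := by
        have e1 : c K K = c h K + c (K \ h) K := h1A K
        have e2 : c (K \ h) K = c K (K \ h) := hsymc _ _
        have e3 : c K (K \ h) = c h (K \ h) + c (K \ h) (K \ h) := by
          rw [hsymc K (K \ h), h2A (K \ h), hsymc (K \ h) h, hsymc (K \ h) (K \ h)]
        have e4 : c h K = c h h + c h (K \ h) := h2A h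
        have hB' : B = 2 * h.card + bf.card := hB
        omega
      have hTF : T F = (c h K : ENNReal) := by
        rw [hT, hc]
        push_cast
        refine Finset.sum_congr rfl fun u _ => Finset.sum_congr rfl fun x _ => ?_
        split <;> simp
      rw [hTF]
      exact_mod_cast hchK
    have hae : ∀ᵐ F ∂μ, T F ≤ (B : ENNReal) := by
      rw [ae_iff]
      refine hnull _ ?_ ?_
      · have heq : {F | ¬ T F ≤ (B : ENNReal)} = {F | (B : ENNReal) < T F} := by
          ext F; simp [not_le]
        rw [heq]
        exact measurableSet_lt measurable_const hTmeas
      · ext F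
        simp only [Set.mem_inter_iff, Set.mem_setOf_eq, Set.mem_empty_iff_false, iff_false,
          not_and]
        intro hnotle hFS
        exact hnotle (hptwise F hFS)
    have hintle : ∫⁻ F, T F ∂μ ≤ (B : ENNReal) := by
      calc ∫⁻ F, T F ∂μ ≤ ∫⁻ _, (B : ENNReal) ∂μ := lintegral_mono_ae hae
        _ = (B : ENNReal) := by rw [lintegral_const, measure_univ, mul_one]
    have hrows : ∀ u ∈ h, (∑ x ∈ K, m u x) = Dv := by
      intro u hu
      have h1 : (∑ x ∈ K, m u x) = ∑ x ∈ N u, m u x := by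
        refine (Finset.sum_subset (hNsub u hu) ?_).symm
        intro x _ hxN
        exact hm_zero u x (fun hadj => hxN ((hmemN u x).mpr hadj))
      rw [h1, ← htsum_fin u, hminv u]
    have hfinal : (h.card : ENNReal) * Dv ≤ (B : ENNReal) := by
      calc (h.card : ENNReal) * Dv = ∑ u ∈ h, ∑ x ∈ K, m u x := by
            rw [Finset.sum_congr rfl hrows, Finset.sum_const, nsmul_eq_mul]
        _ = ∫⁻ F, T F ∂μ := hint
        _ ≤ (B : ENNReal) := hintle
    have hcardpos : (0 : ℝ) < h.card := by
      have := Finset.card_pos.mpr hne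
      exact_mod_cast this
    have hreal : (h.card : ℝ) * Dv.toReal ≤ (B : ℝ) := by
      have hlhs_ne : (h.card : ENNReal) * Dv ≠ ⊤ :=
        ENNReal.mul_ne_top (ENNReal.natCast_ne_top _) hDv_ne
      have h2 := (ENNReal.toReal_le_toReal hlhs_ne (ENNReal.natCast_ne_top B)).mpr hfinal
      rwa [ENNReal.toReal_mul, ENNReal.toReal_natCast, ENNReal.toReal_natCast] at h2
    rw [hncard]
    have hBr : (B : ℝ) = 2 * (h.card : ℝ) + (bf.card : ℝ) := by
      rw [hB]; push_cast; ring
    have hdiv : Dv.toReal ≤ (2 * (h.card : ℝ) + (bf.card : ℝ)) / (h.card : ℝ) := by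
      rw [le_div_iff₀ hcardpos]
      nlinarith [hreal, hBr]
    calc Dv.toReal ≤ (2 * (h.card : ℝ) + (bf.card : ℝ)) / (h.card : ℝ) := hdiv
      _ = 2 + (bf.card : ℝ) / (h.card : ℝ) := by field_simp
  -- conclude
  have hgoal : (∑' w : V, (μ {F | F (v, w) = true}).toReal) = Dv.toReal := by
    have h1 : (∑' w : V, (μ {F | F (v, w) = true}).toReal) = ∑ w ∈ N v, (m v w).toReal := by
      refine tsum_eq_sum (fun w hw => ?_)
      have hz := hm_zero v w (fun hadj => hw ((hmemN v w).mpr hadj))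
      show (m v w).toReal = 0
      rw [hz, ENNReal.toReal_zero]
    rw [h1, hDv, htsum_fin v, ENNReal.toReal_sum (fun w _ => (lt_of_le_of_lt (hm_le v w)
      ENNReal.one_lt_top).ne)]
  rw [hgoal, hiV]
  have hSne : Set.Nonempty {r : ℝ | ∃ h : Finset V, h.Nonempty ∧
      r = (({w : V | w ∉ h ∧ ∃ u ∈ h, G.Adj u w}.ncard : ℝ)) / (h.card : ℝ)} :=
    ⟨_, ⟨{v}, Finset.singleton_nonempty v, rfl⟩⟩
  have hle : Dv.toReal - 2 ≤ sInf {r : ℝ | ∃ h : Finset V, h.Nonempty ∧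
      r = (({w : V | w ∉ h ∧ ∃ u ∈ h, G.Adj u w}.ncard : ℝ)) / (h.card : ℝ)} := by
    refine le_csInf hSne ?_
    rintro b ⟨h, hne, rfl⟩
    have := hmain h hne
    linarith
  linarith
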